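/- arXiv:math/0608776 — 6 statements merged into one kernel-verified Lean document; each statement's English description precedes it below -/
import Mathlib

section
/- Let c_n denote the number of n-colour self-inverse compositions of 2n into an odd number of parts (with c_0 = 0). Then, as formal power series over ℤ, (1 − 3X + X²) · Σ_{n≥0} c_n Xⁿ = 2X. -/
/-- An n-colour composition of `ν` is a list of pairs `(p, c)` with `1 ≤ c ≤ p`
whose parts `p` sum to `ν`. -/
def IsNColourComposition (ν : ℕ) (l : List (ℕ × ℕ)) : Prop :=
  (∀ pc ∈ l, 1 ≤ pc.2 ∧ pc.2 ≤ pc.1) ∧ (l.map Prod.fst).sum = ν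

namespace NCCaux

/-- Number of n-colour compositions of `n`. -/
noncomputable def A (n : ℕ) : ℕ :=
  Nat.card {l : List (ℕ × ℕ) // IsNColourComposition n l}

lemma ncc_zero (l : List (ℕ × ℕ)) : IsNColourComposition 0 l ↔ l = [] := by
  constructor
  · rintro ⟨h1, h2⟩
    rcases l with _ | ⟨⟨p, c⟩, t⟩
    · rfl
    · exfalso
      have hp := h1 (p, c) (by simp)
      simp [List.sum_eq_zero_iff] at h2
      omega
  · rintro rfl
    exact ⟨by simp, by simp⟩

instance : Unique {l : List (ℕ × ℕ) // IsNColourComposition 0 l} where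
  default := ⟨[], (ncc_zero []).2 rfl⟩
  uniq := by rintro ⟨l, hl⟩; ext1; simpa using (ncc_zero l).1 hl

lemma A_zero : A 0 = 1 := Nat.card_unique

/-- The forward map for the head decomposition of a composition. -/
def consMap (n : ℕ) :
    ((p : Fin (n + 1)) × (Fin ((p : ℕ) + 1) ×
        {l : List (ℕ × ℕ) // IsNColourComposition (n - (p : ℕ)) l})) →
      {l : List (ℕ × ℕ) // IsNColourComposition (n + 1) l} :=
  fun x => ⟨((x.1 : ℕ) + 1, (x.2.1 : ℕ) + 1) :: x.2.2.1, by
    have hp : (x.1 : ℕ) < n + 1 := x.1.isLt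
    have hcx : (x.2.1 : ℕ) < (x.1 : ℕ) + 1 := x.2.1.isLt
    obtain ⟨hl1, hl2⟩ := x.2.2.2
    refine ⟨?_, ?_⟩
    · intro pc hpc
      rcases List.mem_cons.1 hpc with h | h
      · subst h; simp; omega
      · exact hl1 pc h
    · simp only [List.map_cons, List.sum_cons, hl2]
      omega⟩

lemma consMap_bij (n : ℕ) : Function.Bijective (consMap n) := by
  constructor
  · rintro ⟨⟨p₁, hp₁⟩, ⟨c₁, hc₁⟩, ⟨l₁, hl₁⟩⟩ ⟨⟨p₂, hp₂⟩, ⟨c₂, hc₂⟩, ⟨l₂, hl₂⟩⟩ h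
    simp only [consMap, Subtype.mk.injEq, List.cons.injEq, Prod.mk.injEq] at h
    obtain ⟨⟨h1, h2⟩, h3⟩ := h
    have : p₁ = p₂ := by omega
    subst this
    have : c₁ = c₂ := by omega
    subst this
    subst h3
    rfl
  · rintro ⟨l, hl1, hl2⟩
    rcases l with _ | ⟨⟨p, c⟩, t⟩
    · exfalso; simp at hl2
    · have hpc := hl1 (p, c) (by simp)
      simp only [List.map_cons, List.sum_cons] at hl2
      have hp1 : 1 ≤ p := by omega
      have hple : p ≤ n + 1 := by omega
      refine ⟨⟨⟨p - 1, by omega⟩, ⟨c - 1, by simp; omega⟩,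
        ⟨t, fun pc hpc => hl1 pc (List.mem_cons_of_mem _ hpc), by simp; omega⟩⟩, ?_⟩
      simp only [consMap, Subtype.mk.injEq, List.cons.injEq, Prod.mk.injEq]
      apply Subtype.ext
      simp only [List.cons.injEq, Prod.mk.injEq]
      exact ⟨⟨by omega, by omega⟩, trivial⟩

lemma ncc_finite : ∀ n : ℕ, Finite {l : List (ℕ × ℕ) // IsNColourComposition n l} := by
  intro n
  induction n using Nat.strong_induction_on with
  | _ n ih =>
    match n with
    | 0 => infer_instance
    | n + 1 =>
      haveI : ∀ p : Fin (n + 1),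
          Finite {l : List (ℕ × ℕ) // IsNColourComposition (n - (p : ℕ)) l} :=
        fun p => ih (n - p) (by omega)
      exact Finite.of_equiv _ (Equiv.ofBijective _ (consMap_bij n))

lemma A_succ (n : ℕ) :
    A (n + 1) = ∑ p ∈ Finset.range (n + 1), (p + 1) * A (n - p) := by
  haveI : ∀ m : ℕ, Finite {l : List (ℕ × ℕ) // IsNColourComposition m l} := ncc_finite
  haveI : ∀ m : ℕ, Fintype {l : List (ℕ × ℕ) // IsNColourComposition m l} :=
    fun m => Fintype.ofFinite _
  calc A (n + 1)
      = Nat.card ((p : Fin (n + 1)) × (Fin ((p : ℕ) + 1) ×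
          {l : List (ℕ × ℕ) // IsNColourComposition (n - (p : ℕ)) l})) :=
        (Nat.card_congr (Equiv.ofBijective _ (consMap_bij n))).symm
    _ = ∑ p : Fin (n + 1), ((p : ℕ) + 1) * A (n - (p : ℕ)) := by
        rw [Nat.card_eq_fintype_card, Fintype.card_sigma]
        refine Finset.sum_congr rfl fun p _ => ?_
        rw [Fintype.card_prod, Fintype.card_fin]
        simp [A, Nat.card_eq_fintype_card]
    _ = ∑ p ∈ Finset.range (n + 1), (p + 1) * A (n - p) :=
        Fin.sum_univ_eq_sum_range (fun p => (p + 1) * A (n - p)) (n + 1)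

lemma A_one : A 1 = 1 := by
  rw [A_succ]; simp [A_zero]

lemma A_step (n : ℕ) :
    A (n + 2) = 2 * A (n + 1) + ∑ q ∈ Finset.range (n + 1), A (n - q) := by
  rw [A_succ (n + 1), Finset.sum_range_succ']
  simp only [Nat.add_sub_cancel, Nat.zero_add, Nat.sub_zero, one_mul]
  have h1 : ∀ i, (i + 1 + 1) * A (n + 1 - (i + 1)) = (i + 1) * A (n - i) + A (n - i) := by
    intro i
    have : n + 1 - (i + 1) = n - i := by omega
    rw [this]; ring
  rw [Finset.sum_congr rfl fun i _ => h1 i, Finset.sum_add_distrib, ← A_succ n]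
  ring

lemma A_three_term (n : ℕ) : A (n + 3) + A (n + 1) = 3 * A (n + 2) := by
  have h1 := A_step (n + 1)
  simp only [show n + 1 + 2 = n + 3 from rfl, show n + 1 + 1 = n + 2 from rfl] at h1
  have h2 := A_step n
  have h3 : ∑ q ∈ Finset.range (n + 2), A (n + 1 - q)
      = A (n + 1) + ∑ q ∈ Finset.range (n + 1), A (n - q) := by
    rw [Finset.sum_range_succ']
    have he : ∀ i, n + 1 - (i + 1) = n - i := fun i => by omega
    simp only [he, Nat.sub_zero]
    ring
  omega

lemma A_two : A 2 = 3 := by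
  have := A_step 0
  simp [A_one, A_zero] at this
  omega

/-- Forward map for the palindrome decomposition. -/
def palMap (n : ℕ) :
    ((m : Fin (n + 1)) × (Fin (2 * (m : ℕ) + 2) ×
        {l : List (ℕ × ℕ) // IsNColourComposition (n - (m : ℕ)) l})) →
      {l : List (ℕ × ℕ) //
        IsNColourComposition (2 * (n + 1)) l ∧ l.reverse = l ∧ Odd l.length} :=
  fun x => ⟨x.2.2.1 ++ (2 * ((x.1 : ℕ) + 1), (x.2.1 : ℕ) + 1) :: x.2.2.1.reverse, by
    have hm : (x.1 : ℕ) < n + 1 := x.1.isLt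
    have hcx : (x.2.1 : ℕ) < 2 * (x.1 : ℕ) + 2 := x.2.1.isLt
    obtain ⟨hh1, hh2⟩ := x.2.2.2
    refine ⟨⟨?_, ?_⟩, ?_, ?_⟩
    · intro pc hpc
      simp only [List.mem_append, List.mem_cons, List.mem_reverse] at hpc
      rcases hpc with h' | h' | h'
      · exact hh1 pc h'
      · subst h'; simp; omega
      · exact hh1 pc h'
    · simp only [List.map_append, List.map_cons, List.sum_append, List.sum_cons,
        List.map_reverse, List.sum_reverse, hh2]
      omega
    · simp [List.reverse_append]
    · refine ⟨x.2.2.1.length, ?_⟩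
      simp only [List.length_append, List.length_cons, List.length_reverse]
      omega⟩

lemma palMap_bij (n : ℕ) : Function.Bijective (palMap n) := by
  constructor
  · rintro ⟨⟨m₁, hm₁⟩, ⟨c₁, hc₁⟩, ⟨l₁, hl₁⟩⟩ ⟨⟨m₂, hm₂⟩, ⟨c₂, hc₂⟩, ⟨l₂, hl₂⟩⟩ h
    simp only [palMap, Subtype.mk.injEq] at h
    have hlen : l₁.length = l₂.length := by
      have := congrArg List.length h
      simp only [List.length_append, List.length_cons, List.length_reverse] at this
      omega
    obtain ⟨h1, h2⟩ := List.append_inj h hlen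
    simp only [List.cons.injEq, Prod.mk.injEq] at h2
    obtain ⟨⟨e1, e2⟩, _⟩ := h2
    have : m₁ = m₂ := by omega
    subst this
    have : c₁ = c₂ := by omega
    subst this
    subst h1
    rfl
  · rintro ⟨l, ⟨hl1, hl2⟩, hrev, hodd⟩
    obtain ⟨k, hk⟩ := hodd
    have hkl : k < l.length := by rw [hk]; omega
    have hdrop : l.drop (k + 1) = (l.take k).reverse := by
      have h1 : l.take k = (l.drop (k + 1)).reverse := by
        conv_lhs => rw [← hrev]
        rw [List.take_reverse, show l.length - k = k + 1 from by omega]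
      rw [h1, List.reverse_reverse]
    have hdec : l = l.take k ++ l[k] :: (l.take k).reverse := by
      conv_lhs => rw [← List.take_append_drop k l]
      congr 1
      rw [List.drop_eq_getElem_cons hkl, hdrop]
    have hmem : l[k] ∈ l := List.getElem_mem hkl
    have hcol := hl1 _ hmem
    set s : ℕ := ((l.take k).map Prod.fst).sum with hs
    have hsum : s + l[k].1 + s = 2 * (n + 1) := by
      conv_rhs => rw [← hl2]
      conv_rhs => rw [hdec]
      simp only [List.map_append, List.map_cons, List.sum_append, List.sum_cons,
        List.map_reverse, List.sum_reverse, ← hs]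
      ring
    have hsle : s ≤ n := by omega
    refine ⟨⟨⟨n - s, by omega⟩, ⟨l[k].2 - 1, by
        simp only [Fin.val_mk]; omega⟩,
      ⟨l.take k, fun pc hpc => hl1 pc (by rw [hdec]; exact List.mem_append_left _ hpc), by
        simp only [Fin.val_mk, ← hs]; omega⟩⟩, ?_⟩
    simp only [palMap, Subtype.mk.injEq, Fin.val_mk]
    conv_rhs => rw [hdec]
    congr 2
    conv_rhs => rw [← Prod.mk.eta (p := l[k])]
    congr 1 <;> omega

lemma card_pal (n : ℕ) :
    Nat.card {l : List (ℕ × ℕ) //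
        IsNColourComposition (2 * (n + 1)) l ∧ l.reverse = l ∧ Odd l.length}
      = 2 * A (n + 1) := by
  haveI : ∀ m : ℕ, Finite {l : List (ℕ × ℕ) // IsNColourComposition m l} := ncc_finite
  haveI : ∀ m : ℕ, Fintype {l : List (ℕ × ℕ) // IsNColourComposition m l} :=
    fun m => Fintype.ofFinite _
  rw [← Nat.card_congr (Equiv.ofBijective _ (palMap_bij n))]
  rw [Nat.card_eq_fintype_card, Fintype.card_sigma]
  have hcard : ∀ p : Fin (n + 1), Fintype.card (Fin (2 * (p : ℕ) + 2) ×
      {l : List (ℕ × ℕ) // IsNColourComposition (n - (p : ℕ)) l})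
      = (2 * (p : ℕ) + 2) * A (n - (p : ℕ)) := by
    intro p
    rw [Fintype.card_prod, Fintype.card_fin]
    simp [A, Nat.card_eq_fintype_card]
  rw [Finset.sum_congr rfl fun p _ => hcard p,
    Fin.sum_univ_eq_sum_range (fun i => (2 * i + 2) * A (n - i)) (n + 1)]
  have h2 : ∀ i, (2 * i + 2) * A (n - i) = 2 * ((i + 1) * A (n - i)) := fun i => by ring
  rw [Finset.sum_congr rfl fun i _ => h2 i, ← Finset.mul_sum, ← A_succ]

end NCCaux

theorem selfinverse_even_oddparts_generating_function (c : ℕ → ℕ)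
    (hc0 : c 0 = 0)
    (hc : ∀ n, 1 ≤ n → c n = Nat.card {l : List (ℕ × ℕ) //
        IsNColourComposition (2 * n) l ∧ l.reverse = l ∧ Odd l.length}) :
    (1 - 3 * PowerSeries.X + PowerSeries.X ^ 2) *
        PowerSeries.mk (fun n => (c n : ℤ)) = 2 * PowerSeries.X := by
  have hcA : ∀ n : ℕ, c (n + 1) = 2 * NCCaux.A (n + 1) := by
    intro n
    rw [hc (n + 1) (by omega), NCCaux.card_pal]
  have key : ∀ n : ℕ, c (n + 3) + c (n + 1) = 3 * c (n + 2) := by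
    intro n
    have h := NCCaux.A_three_term n
    have e1 := hcA (n + 2)
    have e2 := hcA n
    have e3 := hcA (n + 1)
    simp only [show n + 2 + 1 = n + 3 from rfl, show n + 1 + 1 = n + 2 from rfl] at e1 e3
    omega
  have hc1 : c 1 = 2 := by rw [hcA 0, NCCaux.A_one]
  have hc2 : c 2 = 6 := by rw [hcA 1, NCCaux.A_two]
  ext n
  have expand : (1 - 3 * PowerSeries.X + PowerSeries.X ^ 2) *
      PowerSeries.mk (fun n => (c n : ℤ))
      = PowerSeries.mk (fun n => (c n : ℤ))
        - 3 * (PowerSeries.X * PowerSeries.mk (fun n => (c n : ℤ)))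
        + PowerSeries.X ^ 2 * PowerSeries.mk (fun n => (c n : ℤ)) := by ring
  rw [expand]
  simp only [map_add, map_sub]
  have h3 : ((3 : PowerSeries ℤ)) = (PowerSeries.C 3 : PowerSeries ℤ) := by simp
  have h2 : ((2 : PowerSeries ℤ)) = (PowerSeries.C 2 : PowerSeries ℤ) := by simp
  match n with
  | 0 =>
      simp [hc0]
  | 1 =>
      rw [h3, h2, PowerSeries.coeff_C_mul, PowerSeries.coeff_C_mul,
        PowerSeries.coeff_succ_X_mul, PowerSeries.coeff_X_pow_mul']
      simp [hc0, hc1]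
  | (n + 2) =>
      rw [h3, h2, PowerSeries.coeff_C_mul, PowerSeries.coeff_C_mul,
        PowerSeries.coeff_succ_X_mul, PowerSeries.coeff_X_pow_mul']
      simp only [PowerSeries.coeff_mk, PowerSeries.coeff_X]
      rw [if_pos (by omega : 2 ≤ n + 2), show n + 2 - 2 = n from by omega]
      rw [if_neg (by omega : ¬ n + 2 = 1), mul_zero]
      match n with
      | 0 =>
          rw [hc0, hc1, hc2]; norm_num
      | (m + 1) =>
          have hk := key m
          have hk' : (c (m + 3) : ℤ) + c (m + 1) = 3 * c (m + 2) := by exact_mod_cast hk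
          simp only [show m + 1 + 2 = m + 3 from rfl, show m + 1 + 1 = m + 2 from rfl]
          linarith
end

section
/- Let d_n denote the number of n-colour self-inverse compositions of 2n (with d_0 = 0). Then, as formal power series over ℤ, (1 − 3X + X²) · Σ_{n≥0} d_n Xⁿ = 3X. -/
/-- Finset enumerating all n-colour compositions of `m`. -/
def nccF : ℕ → Finset (List (ℕ × ℕ))
  | 0 => {[]}
  | (m+1) =>
    (Finset.range (m+1)).biUnion fun i =>
      (Finset.Icc 1 (i+1)).biUnion fun c =>
        (nccF (m - i)).image (List.cons (i+1, c))
decreasing_by omega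

theorem mem_nccF (m : ℕ) (l : List (ℕ × ℕ)) :
    l ∈ nccF m ↔ IsNColourComposition m l := by
  induction m using Nat.strong_induction_on generalizing l with
  | _ m ih =>
    match m with
    | 0 =>
      simp only [nccF, Finset.mem_singleton, IsNColourComposition]
      constructor
      · rintro rfl; simp
      · rintro ⟨h1, h2⟩
        cases l with
        | nil => rfl
        | cons a t =>
          exfalso
          have := h1 a (by simp)
          simp at h2
          omega
    | (m+1) =>
      simp only [nccF, Finset.mem_biUnion, Finset.mem_range, Finset.mem_Icc,
        Finset.mem_image]
      constructor
      · rintro ⟨i, hi, c, hc, t, ht, rfl⟩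
        have ht' := (ih (m - i) (by omega) t).mp ht
        obtain ⟨hcon, hsum⟩ := ht'
        refine ⟨?_, ?_⟩
        · rintro pc hpc
          rcases List.mem_cons.mp hpc with rfl | h
          · exact ⟨hc.1, hc.2⟩
          · exact hcon pc h
        · simp only [List.map_cons, List.sum_cons, hsum]
          omega
      · rintro ⟨hcon, hsum⟩
        cases l with
        | nil => simp at hsum
        | cons a t =>
          obtain ⟨p, c⟩ := a
          have hac := hcon (p, c) (by simp)
          simp only [List.map_cons, List.sum_cons] at hsum
          have hp1 : 1 ≤ p := le_trans hac.1 hac.2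
          refine ⟨p - 1, by omega, c, ⟨hac.1, by omega⟩, t, ?_, by
            simp; omega⟩
          rw [ih (m - (p-1)) (by omega) t]
          refine ⟨fun pc hpc => hcon pc (List.mem_cons_of_mem _ hpc), ?_⟩
          omega

theorem card_nccF_zero : (nccF 0).card = 1 := by rw [nccF]; rfl

theorem head_eq_of_mem_inner {m i c : ℕ} {l : List (ℕ × ℕ)}
    (h : l ∈ (nccF (m - i)).image (List.cons (i+1, c))) :
    ∃ t, l = (i+1, c) :: t := by
  obtain ⟨t, _, rfl⟩ := Finset.mem_image.mp h
  exact ⟨t, rfl⟩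

theorem card_nccF_succ (m : ℕ) :
    (nccF (m+1)).card = ∑ i ∈ Finset.range (m+1), (i+1) * (nccF (m-i)).card := by
  rw [nccF, Finset.card_biUnion]
  · refine Finset.sum_congr rfl fun i _ => ?_
    rw [Finset.card_biUnion]
    · have : ∀ c ∈ Finset.Icc 1 (i+1),
          ((nccF (m - i)).image (List.cons (i+1, c))).card = (nccF (m-i)).card := by
        intro c _
        exact Finset.card_image_of_injective _ (List.cons_injective)
      rw [Finset.sum_congr rfl this, Finset.sum_const, Nat.card_Icc]
      simp [mul_comm]
    · intro c _ c' _ hcc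
      simp only [Function.onFun]; rw [Finset.disjoint_left]
      rintro l hl hl'
      obtain ⟨t, rfl⟩ := head_eq_of_mem_inner hl
      obtain ⟨t', heq⟩ := head_eq_of_mem_inner hl'
      apply hcc
      have := (List.cons.injEq _ _ _ _).mp heq
      exact (Prod.mk.injEq _ _ _ _).mp this.1 |>.2.symm |>.symm
  · intro i _ i' _ hii
    simp only [Function.onFun]; rw [Finset.disjoint_left]
    rintro l hl hl'
    simp only [Finset.mem_biUnion] at hl hl'
    obtain ⟨c, _, hl⟩ := hl
    obtain ⟨c', _, hl'⟩ := hl'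
    obtain ⟨t, rfl⟩ := head_eq_of_mem_inner hl
    obtain ⟨t', heq⟩ := head_eq_of_mem_inner hl'
    apply hii
    have := (List.cons.injEq _ _ _ _).mp heq
    have := (Prod.mk.injEq _ _ _ _).mp this.1
    omega

theorem nccF_card_one : (nccF 1).card = 1 := by
  rw [card_nccF_succ]; simp [card_nccF_zero]

theorem nccF_card_two : (nccF 2).card = 3 := by
  rw [card_nccF_succ]
  simp [Finset.sum_range_succ, card_nccF_zero, nccF_card_one]

theorem nccF_card_succ_eq (k : ℕ) (hk : 1 ≤ k) :
    (nccF (k+1)).card = (nccF k).card + ∑ j ∈ Finset.range (k+1), (nccF j).card := by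
  obtain ⟨k, rfl⟩ := Nat.exists_eq_succ_of_ne_zero (Nat.one_le_iff_ne_zero.mp hk)
  rw [card_nccF_succ]
  have h1 : ∀ i ∈ Finset.range (k+1+1), (i+1) * (nccF (k+1-i)).card
      = i * (nccF (k+1-i)).card + (nccF (k+1-i)).card := by
    intro i _; ring
  rw [Finset.sum_congr rfl h1, Finset.sum_add_distrib]
  congr 1
  · rw [Finset.sum_range_succ' (fun i => i * (nccF (k+1-i)).card)]
    simp only [Nat.zero_mul, add_zero, mul_zero, zero_mul]
    rw [card_nccF_succ]
    refine (Finset.sum_congr rfl fun i hi => ?_).symm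
    congr 3
    omega
  · rw [← Finset.sum_range_reflect]
    refine Finset.sum_congr rfl fun i hi => ?_
    simp only [Finset.mem_range] at hi
    congr 2
    omega

theorem nccF_card_rec (m : ℕ) (hm : 1 ≤ m) :
    (nccF (m+2)).card + (nccF m).card = 3 * (nccF (m+1)).card := by
  have h1 := nccF_card_succ_eq m hm
  have h2 := nccF_card_succ_eq (m+1) (by omega)
  rw [Finset.sum_range_succ] at h2
  rw [show m+1+1 = m+2 from rfl] at h2
  omega

/-- Finset enumerating all self-inverse n-colour compositions of `2 * n`. -/
def siF (n : ℕ) : Finset (List (ℕ × ℕ)) :=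
  (nccF n).image (fun w => w ++ w.reverse) ∪
  (Finset.range n).biUnion fun i =>
    (Finset.Icc 1 (2*(i+1))).biUnion fun c =>
      (nccF (n - 1 - i)).image (fun w => w ++ (2*(i+1), c) :: w.reverse)

theorem sum_parts_reverse (w : List (ℕ × ℕ)) :
    (w.reverse.map Prod.fst).sum = (w.map Prod.fst).sum := by
  simp [List.sum_reverse]

theorem mem_siF (n : ℕ) (l : List (ℕ × ℕ)) :
    l ∈ siF n ↔ IsNColourComposition (2 * n) l ∧ l.reverse = l := by
  constructor
  · intro hl
    rcases Finset.mem_union.mp hl with h | h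
    · obtain ⟨w, hw, rfl⟩ := Finset.mem_image.mp h
      obtain ⟨hcon, hsum⟩ := (mem_nccF n w).mp hw
      refine ⟨⟨?_, ?_⟩, by simp⟩
      · intro pc hpc
        rcases List.mem_append.mp hpc with h | h
        · exact hcon pc h
        · exact hcon pc (List.mem_reverse.mp h)
      · simp only [List.map_append, List.sum_append, sum_parts_reverse, hsum]
        omega
    · simp only [Finset.mem_biUnion, Finset.mem_range, Finset.mem_Icc,
        Finset.mem_image] at h
      obtain ⟨i, hi, c, hc, w, hw, rfl⟩ := h
      obtain ⟨hcon, hsum⟩ := (mem_nccF _ w).mp hw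
      refine ⟨⟨?_, ?_⟩, by simp⟩
      · intro pc hpc
        rcases List.mem_append.mp hpc with h | h
        · exact hcon pc h
        · rcases List.mem_cons.mp h with rfl | h
          · exact ⟨hc.1, hc.2⟩
          · exact hcon pc (List.mem_reverse.mp h)
      · simp only [List.map_append, List.sum_append, List.map_cons,
          List.sum_cons, sum_parts_reverse, hsum]
        omega
  · rintro ⟨⟨hcon, hsum⟩, hrev⟩
    set k := l.length / 2 with hk
    have htr : (l.take k).reverse = l.drop (l.length - k) := by
      rw [List.reverse_take, hrev]
    have hsplit : l = l.take k ++ l.drop k := (List.take_append_drop k l).symm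
    have hsum' : ((l.take k).map Prod.fst).sum + ((l.drop k).map Prod.fst).sum = 2*n := by
      rw [← List.sum_append, ← List.map_append, ← hsplit]
      exact hsum
    have hconTake : ∀ pc ∈ l.take k, 1 ≤ pc.2 ∧ pc.2 ≤ pc.1 :=
      fun pc hpc => hcon pc (List.mem_of_mem_take hpc)
    rcases Nat.even_or_odd l.length with he | ho
    · obtain ⟨r, hr⟩ := he
      have hlen : l.length = k + k := by omega
      have hdrop : l.drop k = (l.take k).reverse := by
        rw [htr]; congr 1; omega
      have hS : ((l.take k).map Prod.fst).sum = n := by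
        rw [hdrop, sum_parts_reverse] at hsum'; omega
      refine Finset.mem_union_left _ (Finset.mem_image.mpr ⟨l.take k, ?_, ?_⟩)
      · exact (mem_nccF n _).mpr ⟨hconTake, hS⟩
      · rw [← hdrop]; exact hsplit.symm
    · obtain ⟨r, hr⟩ := ho
      have hklt : k < l.length := by omega
      have hdrop1 : l.drop k = l[k] :: l.drop (k+1) := List.drop_eq_getElem_cons hklt
      have hdrop2 : l.drop (k+1) = (l.take k).reverse := by
        rw [htr]; congr 1; omega
      have hel : l[k] ∈ l := List.getElem_mem hklt
      have hce := hcon l[k] hel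
      have hsum2 : 2 * ((l.take k).map Prod.fst).sum + l[k].1 = 2 * n := by
        rw [hdrop1] at hsum'
        simp only [List.map_cons, List.sum_cons, hdrop2, sum_parts_reverse] at hsum'
        omega
      set S := ((l.take k).map Prod.fst).sum with hSdef
      have hSn : S ≤ n := by omega
      have hq1 : 1 ≤ n - S := by omega
      have he1 : l[k].1 = 2 * (n - S) := by omega
      refine Finset.mem_union_right _ (Finset.mem_biUnion.mpr ⟨n - S - 1, ?_, ?_⟩)
      · simp only [Finset.mem_range]; omega
      refine Finset.mem_biUnion.mpr ⟨l[k].2, ?_, ?_⟩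
      · simp only [Finset.mem_Icc]
        constructor
        · exact hce.1
        · have := hce.2; omega
      refine Finset.mem_image.mpr ⟨l.take k, ?_, ?_⟩
      · refine (mem_nccF _ _).mpr ⟨hconTake, ?_⟩
        omega
      · have hmid : (2 * (n - S - 1 + 1), l[k].2) = l[k] := by
          have : 2 * (n - S - 1 + 1) = l[k].1 := by omega
          rw [this]
        rw [hmid, ← hdrop2, ← hdrop1]
        exact hsplit.symm

theorem mid_eq {α : Type*} {w w' : List α} {e e' : α}
    (h : w ++ e :: w.reverse = w' ++ e' :: w'.reverse) : w = w' ∧ e = e' := by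
  have hlen : w.length = w'.length := by
    have := congrArg List.length h
    simp only [List.length_append, List.length_cons, List.length_reverse] at this
    omega
  obtain ⟨h1, h2⟩ := List.append_inj h hlen
  exact ⟨h1, by injection h2⟩

theorem doub_inj {α : Type*} : Function.Injective (fun w : List α => w ++ w.reverse) := by
  intro w w' h
  simp only at h
  have hlen : w.length = w'.length := by
    have := congrArg List.length h
    simp only [List.length_append, List.length_reverse] at this
    omega
  exact (List.append_inj h hlen).1

theorem odd_inj {α : Type*} (e : α) :
    Function.Injective (fun w : List α => w ++ e :: w.reverse) := by
  intro w w' h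
  exact (mid_eq h).1

theorem card_siF (n : ℕ) :
    (siF n).card = (nccF n).card
      + ∑ i ∈ Finset.range n, (2*(i+1)) * (nccF (n-1-i)).card := by
  rw [siF, Finset.card_union_of_disjoint, Finset.card_image_of_injective _ doub_inj,
    Finset.card_biUnion]
  · congr 1
    refine Finset.sum_congr rfl fun i _ => ?_
    rw [Finset.card_biUnion]
    · have : ∀ c ∈ Finset.Icc 1 (2*(i+1)),
          ((nccF (n-1-i)).image (fun w => w ++ (2*(i+1), c) :: w.reverse)).card
            = (nccF (n-1-i)).card := fun c _ =>
        Finset.card_image_of_injective _ (odd_inj _)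
      rw [Finset.sum_congr rfl this, Finset.sum_const, Nat.card_Icc]
      simp [mul_comm]
    · intro c _ c' _ hcc
      simp only [Function.onFun]; rw [Finset.disjoint_left]
      rintro l hl hl'
      obtain ⟨w, _, rfl⟩ := Finset.mem_image.mp hl
      obtain ⟨w', _, heq⟩ := Finset.mem_image.mp hl'
      obtain ⟨-, h2⟩ := mid_eq heq
      exact hcc (by injection h2 with h3 h4; omega)
  · intro i _ i' _ hii
    simp only [Function.onFun]; rw [Finset.disjoint_left]
    rintro l hl hl'
    simp only [Finset.mem_biUnion, Finset.mem_image] at hl hl'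
    obtain ⟨c, _, w, _, rfl⟩ := hl
    obtain ⟨c', _, w', _, heq⟩ := hl'
    obtain ⟨-, h2⟩ := mid_eq heq
    exact hii (by injection h2 with h3 h4; omega)
  · rw [Finset.disjoint_left]
    rintro l hl hl'
    obtain ⟨w, _, rfl⟩ := Finset.mem_image.mp hl
    simp only [Finset.mem_biUnion, Finset.mem_image] at hl'
    obtain ⟨i, _, c, _, w', _, heq⟩ := hl'
    have := congrArg List.length heq
    simp only [List.length_append, List.length_reverse, List.length_cons] at this
    omega

theorem card_siF_succ (m : ℕ) : (siF (m+1)).card = 3 * (nccF (m+1)).card := by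
  rw [card_siF]
  have h1 : ∀ i ∈ Finset.range (m+1),
      (2*(i+1)) * (nccF (m+1-1-i)).card = 2 * ((i+1) * (nccF (m-i)).card) := by
    intro i _
    rw [show m+1-1-i = m-i from by omega]
    ring
  rw [Finset.sum_congr rfl h1, ← Finset.mul_sum, ← card_nccF_succ]
  ring

theorem selfinverse_even_generating_function (d : ℕ → ℕ)
    (hd0 : d 0 = 0)
    (hd : ∀ n, 1 ≤ n → d n = Nat.card {l : List (ℕ × ℕ) //
        IsNColourComposition (2 * n) l ∧ l.reverse = l}) :
    (1 - 3 * PowerSeries.X + PowerSeries.X ^ 2) *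
        PowerSeries.mk (fun n => (d n : ℤ)) = 3 * PowerSeries.X := by
  have hdsi : ∀ n, 1 ≤ n → d n = (siF n).card := by
    intro n hn
    rw [hd n hn]
    have hset : {l : List (ℕ × ℕ) | IsNColourComposition (2 * n) l ∧ l.reverse = l}
        = ↑(siF n) := Set.ext fun l => ((mem_siF n l).symm)
    rw [show {l : List (ℕ × ℕ) // IsNColourComposition (2 * n) l ∧ l.reverse = l}
        = ↥{l : List (ℕ × ℕ) | IsNColourComposition (2 * n) l ∧ l.reverse = l} from rfl,
      hset, Nat.card_coe_set_eq, Set.ncard_coe_finset]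
  have hd3 : ∀ m, d (m+1) = 3 * (nccF (m+1)).card := by
    intro m
    rw [hdsi (m+1) (by omega), card_siF_succ]
  have hd1 : d 1 = 3 := by
    rw [hd3 0, nccF_card_one]
  have hrec : ∀ m, d (m+2) + d m = 3 * d (m+1) := by
    intro m
    match m with
    | 0 =>
      rw [hd0, hd3 1, hd3 0, nccF_card_one, nccF_card_two]
    | (m+1) =>
      rw [hd3 (m+2), hd3 m, hd3 (m+1)]
      have := nccF_card_rec (m+1) (by omega)
      rw [show m+1+2 = m+3 from rfl, show m+1+1 = m+2 from rfl] at this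
      rw [show m+2+1 = m+3 from rfl, show m+1+1 = m+2 from rfl]
      omega
  ext n
  have hexp : (1 - 3 * PowerSeries.X + PowerSeries.X ^ 2) *
      PowerSeries.mk (fun n => (d n : ℤ))
      = PowerSeries.mk (fun n => (d n : ℤ))
        - PowerSeries.C (3 : ℤ) * (PowerSeries.X * PowerSeries.mk (fun n => (d n : ℤ)))
        + PowerSeries.X * (PowerSeries.X * PowerSeries.mk (fun n => (d n : ℤ))) := by
    have h3 : (3 : PowerSeries ℤ) = PowerSeries.C (3 : ℤ) := by
      simp [map_ofNat]
    rw [h3]; ring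
  rw [hexp]
  simp only [map_add, map_sub, PowerSeries.coeff_C_mul]
  match n with
  | 0 => simp [hd0]
  | 1 => simp [PowerSeries.coeff_succ_X_mul, hd1, hd0, map_ofNat]
  | (m+2) =>
    simp only [PowerSeries.coeff_mk, PowerSeries.coeff_succ_X_mul]
    have := hrec m
    have h3X : (PowerSeries.coeff (R := ℤ) (m+2)) (3 * PowerSeries.X) = 0 := by
      rw [show (3 : PowerSeries ℤ) = PowerSeries.C (3 : ℤ) from by simp [map_ofNat],
        PowerSeries.coeff_C_mul, PowerSeries.coeff_X]
      simp
    rw [h3X]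
    omega
end

section
/- For every integer n ≥ 0, Σ_{k=0}^{n} (−1)^{n+k} · C(2n+1, n−k) · a_k = 1 (as integers), where a_k = (2k+1) + Σ_{m=2}^{k+1} Σ_{l=1}^{k} (2l−1)·C(k+m−l−1, 2m−3). -/
/-!
Inside `a k`, each sum over `m` runs along a rising diagonal of Pascal's triangle, which sums to
the Fibonacci number `F (2 (k + 1 - l))`. Convolving these with the odd numbers `2 l - 1` yields
the Lucas number `L (2 k + 1) = F (2 k + 1) + 2 F (2 k) = φ ^ (2 k + 1) + ψ ^ (2 k + 1)`.
Since `φ ψ = -1`, the alternating sum is then the binomial expansion of `(φ + ψ) ^ (2 n + 1)`,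
paired into symmetric terms, and `φ + ψ = 1`.
-/

open Finset Real goldenRatio

theorem Finset.sum_Icc_eq_sum_range {M : Type*} [AddCommMonoid M] (f : ℕ → M) (a b : ℕ) :
    ∑ i ∈ Icc a b, f i = ∑ i ∈ range (b + 1 - a), f (a + i) := by
  rw [← Ico_add_one_right_eq_Icc, sum_Ico_eq_sum_range]

theorem Nat.fib_two_mul_eq_sum_range_choose {j t : ℕ} (hjt : j ≤ t) :
    Nat.fib (2 * j) = ∑ p ∈ range t, (j + p).choose (2 * p + 1) := by
  have hzero : ∀ p, j ≤ p → (j + p).choose (2 * p + 1) = 0 :=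
    fun p hp => Nat.choose_eq_zero_of_lt (by omega)
  rw [← sum_range_add_sum_Ico _ hjt, sum_eq_zero (fun p hp => hzero p (mem_Ico.1 hp).1), add_zero]
  obtain _ | i := j
  · simp
  rw [show 2 * (i + 1) = 2 * i + 1 + 1 by ring, Nat.fib_succ_eq_sum_choose,
    Nat.sum_antidiagonal_eq_sum_range_succ (fun a b => a.choose b), Nat.succ_eq_add_one,
    show 2 * i + 1 + 1 = (i + 1) + (i + 1) by ring, sum_range_add,
    sum_eq_zero (fun a ha => Nat.choose_eq_zero_of_lt (by have := mem_range.1 ha; omega)), zero_add]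
  refine sum_congr rfl fun p hp => ?_
  rw [mem_range] at hp
  rw [show 2 * i + 1 - (i + 1 + p) = i - p by omega, ← Nat.choose_symm (by omega)]
  congr 1
  omega

theorem double_sum_choose_eq_sum_antidiagonal_fib (k : ℕ) :
    ∑ m ∈ Icc 2 (k + 1), ∑ l ∈ Icc 1 k,
        (2 * (l : ℤ) - 1) * (Nat.choose (k + m - l - 1) (2 * m - 3) : ℤ)
      = ∑ p ∈ antidiagonal k, (2 * (p.1 : ℤ) + 1) * Nat.fib (2 * p.2) := by
  rw [sum_comm,
    Nat.sum_antidiagonal_eq_sum_range_succ (fun i j => (2 * (i : ℤ) + 1) * Nat.fib (2 * j)),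
    sum_range_succ, Nat.sub_self, mul_zero, Nat.fib_zero, Nat.cast_zero, mul_zero, add_zero,
    sum_Icc_eq_sum_range, Nat.add_sub_cancel]
  refine sum_congr rfl fun i hi => ?_
  rw [mem_range] at hi
  rw [← mul_sum, sum_Icc_eq_sum_range, Nat.fib_two_mul_eq_sum_range_choose (t := k) (by omega)]
  push_cast
  congr 1
  · ring
  refine sum_congr (by simp) fun p _ => ?_
  congr 2 <;> omega

theorem sum_antidiagonal_odd_mul_fib (k : ℕ) :
    2 * (k : ℤ) + 1 + ∑ p ∈ antidiagonal k, (2 * (p.1 : ℤ) + 1) * Nat.fib (2 * p.2)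
        = Nat.fib (2 * k + 1) + 2 * Nat.fib (2 * k) ∧
      ∑ p ∈ antidiagonal k, (2 * (p.1 : ℤ) + 1) * Nat.fib (2 * p.2 + 1) + 2
        = Nat.fib (2 * k + 2) + 2 * Nat.fib (2 * k + 1) := by
  induction k with
  | zero => simp
  | succ k ih =>
    set E := ∑ p ∈ antidiagonal k, (2 * (p.1 : ℤ) + 1) * Nat.fib (2 * p.2)
    set O := ∑ p ∈ antidiagonal k, (2 * (p.1 : ℤ) + 1) * Nat.fib (2 * p.2 + 1)
    have hE :
        ∑ p ∈ antidiagonal (k + 1), (2 * (p.1 : ℤ) + 1) * Nat.fib (2 * p.2) = E + O := by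
      rw [Nat.sum_antidiagonal_succ', ← sum_add_distrib]
      simp only [Nat.fib_zero, Nat.cast_zero, mul_zero, zero_add, Nat.fib_add_two, Nat.cast_add,
        mul_add]
    have hO : ∑ p ∈ antidiagonal (k + 1), (2 * (p.1 : ℤ) + 1) * Nat.fib (2 * p.2 + 1)
        = 2 * k + 3 + E + 2 * O := by
      rw [Nat.sum_antidiagonal_succ', mul_sum, add_assoc, ← sum_add_distrib]
      congr 1
      · push_cast [Nat.fib_one]; ring
      refine sum_congr rfl fun p _ => ?_
      rw [show 2 * (p.2 + 1) + 1 = 2 * p.2 + 1 + 2 by ring, Nat.fib_add_two, Nat.fib_add_two]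
      push_cast; ring
    have f2 : (Nat.fib (2 * k + 2) : ℤ) = Nat.fib (2 * k) + Nat.fib (2 * k + 1) := by
      simp [Nat.fib_add_two]
    have f3 : (Nat.fib (2 * k + 3) : ℤ) = Nat.fib (2 * k) + 2 * Nat.fib (2 * k + 1) := by
      push_cast [Nat.fib_add_two]; ring
    have f4 : (Nat.fib (2 * k + 4) : ℤ) = 2 * Nat.fib (2 * k) + 3 * Nat.fib (2 * k + 1) := by
      push_cast [Nat.fib_add_two]; ring
    obtain ⟨ihE, ihO⟩ := ih
    rw [hE, hO, show 2 * (k + 1) = 2 * k + 2 by ring, show 2 * k + 2 + 1 = 2 * k + 3 by ring,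
      show 2 * k + 2 + 2 = 2 * k + 4 by ring, f2, f3, f4]
    push_cast
    constructor
    · linear_combination ihE + ihO + f2
    · linear_combination ihE + 2 * ihO + 2 * f2

theorem add_pow_two_mul_add_one {R : Type*} [CommSemiring R] (x y : R) (n : ℕ) :
    (x + y) ^ (2 * n + 1) = ∑ k ∈ range (n + 1),
      (2 * n + 1).choose (n - k) * (x * y) ^ (n - k) * (x ^ (2 * k + 1) + y ^ (2 * k + 1)) := by
  rw [add_pow, show 2 * n + 1 + 1 = (n + 1) + (n + 1) by ring, sum_range_add,
    ← sum_range_reflect, ← sum_add_distrib]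
  refine sum_congr rfl fun k hk => ?_
  obtain ⟨d, rfl⟩ : ∃ d, n = k + d := ⟨n - k, by have := mem_range.1 hk; omega⟩
  rw [show k + d + 1 - 1 - k = d by omega, show 2 * (k + d) + 1 - d = d + (2 * k + 1) by omega,
    show k + d + 1 + k = d + (2 * k + 1) by ring,
    show 2 * (k + d) + 1 - (d + (2 * k + 1)) = d by omega, show k + d - k = d by omega,
    show 2 * (k + d) + 1 = d + (2 * k + 1) + d by ring, Nat.choose_symm_add]
  ring

theorem goldenRatio_pow_add_goldenConj_pow (n : ℕ) :
    φ ^ (n + 1) + ψ ^ (n + 1) = Nat.fib (n + 1) + 2 * Nat.fib n := by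
  rw [← goldenRatio_mul_fib_succ_add_fib, ← goldenConj_mul_fib_succ_add_fib]
  linear_combination (Nat.fib (n + 1) : ℝ) * goldenRatio_add_goldenConj

theorem sum_neg_one_pow_mul_choose_mul_lucas (n : ℕ) :
    ∑ k ∈ range (n + 1), (-1 : ℤ) ^ (n + k) * (2 * n + 1).choose (n - k)
      * (Nat.fib (2 * k + 1) + 2 * Nat.fib (2 * k)) = 1 := by
  have h := add_pow_two_mul_add_one φ ψ n
  rw [goldenRatio_add_goldenConj, goldenRatio_mul_goldenConj, one_pow] at h
  refine Int.cast_injective (α := ℝ) ?_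
  rw [Int.cast_one, h, Int.cast_sum]
  refine sum_congr rfl fun k hk => ?_
  have hsign : (-1 : ℝ) ^ (n + k) = (-1) ^ (n - k) := by
    rw [show n + k = n - k + 2 * k by have := mem_range.1 hk; omega, pow_add, pow_mul]
    norm_num
  rw [goldenRatio_pow_add_goldenConj_pow]
  push_cast
  rw [hsign]
  ring

theorem summation_formula (n : ℕ) (a : ℕ → ℤ)
    (ha : ∀ k, a k = (2 * (k : ℤ) + 1) +
      ∑ m ∈ Finset.Icc 2 (k + 1), ∑ l ∈ Finset.Icc 1 k,
        (2 * (l : ℤ) - 1) * (Nat.choose (k + m - l - 1) (2 * m - 3) : ℤ)) :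
    ∑ k ∈ Finset.range (n + 1),
      (-1 : ℤ) ^ (n + k) * (Nat.choose (2 * n + 1) (n - k) : ℤ) * a k = 1 := by
  have ha_lucas : ∀ k, a k = Nat.fib (2 * k + 1) + 2 * Nat.fib (2 * k) := fun k => by
    rw [ha, double_sum_choose_eq_sum_antidiagonal_fib, (sum_antidiagonal_odd_mul_fib k).1]
  simp only [ha_lucas]
  exact sum_neg_one_pow_mul_choose_mul_lucas n
end

section
/- For every integer ν ≥ 0, the following identity holds in the rational numbers: (2ν+1) + Σ_{m=2}^{ν+1} Σ_{l=1}^{ν} (2l−1)·C(ν+m−l−1, 2m−3) = Σ_{m=0}^{ν} (2ν+1)/(2ν+1−m) · C(2ν+1−m, m). -/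
open Finset

lemma weighted_hs (r : ℕ) : ∀ n, r ≤ n →
    ∑ a ∈ Icc r n, (2 * (n - a) + 1) * a.choose r
      = (n+1).choose (r+1) + 2 * (n+1).choose (r+2) := by
  intro n
  induction n with
  | zero =>
    intro h
    interval_cases r
    simp
  | succ n ih =>
    intro h
    rcases Nat.lt_or_ge r (n+1) with h' | h'
    · have hr : r ≤ n := by omega
      rw [Finset.sum_Icc_succ_top (by omega : r ≤ n+1)]
      have hcong : ∑ a ∈ Icc r n, (2 * (n + 1 - a) + 1) * a.choose r
          = ∑ a ∈ Icc r n, ((2 * (n - a) + 1) * a.choose r + 2 * a.choose r) := by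
        apply Finset.sum_congr rfl
        intro a ha
        simp only [Finset.mem_Icc] at ha
        have : n + 1 - a = (n - a) + 1 := by omega
        rw [this]; ring
      rw [hcong, Finset.sum_add_distrib, ih hr, ← Finset.mul_sum, Nat.sum_Icc_choose]
      have e1 : (n+2).choose (r+1) = (n+1).choose r + (n+1).choose (r+1) :=
        Nat.choose_succ_succ (n+1) r
      have e2 : (n+2).choose (r+2) = (n+1).choose (r+1) + (n+1).choose (r+2) :=
        Nat.choose_succ_succ (n+1) (r+1)
      rw [e1, e2]
      simp [Nat.sub_self]
      ring
    · have : r = n + 1 := by omega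
      subst this
      rw [Finset.Icc_self, Finset.sum_singleton]
      simp [Nat.choose_succ_self]

lemma innerNat (ν m : ℕ) (h2 : 2 ≤ m) (hm : m ≤ ν + 1) :
    ∑ l ∈ Icc 1 ν, (2*l - 1) * (ν + m - l - 1).choose (2*m - 3)
      = (ν + m - 1).choose (2*m - 2) + 2 * (ν + m - 1).choose (2*m - 1) := by
  have step1 : ∑ l ∈ Icc 1 ν, (2*l - 1) * (ν + m - l - 1).choose (2*m - 3)
      = ∑ a ∈ Icc (m - 1) (ν + m - 2), (2*(ν + m - 1 - a) - 1) * a.choose (2*m - 3) := by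
    apply Finset.sum_nbij' (fun l => ν + m - 1 - l) (fun a => ν + m - 1 - a)
    · intro l hl; simp only [mem_Icc] at *; omega
    · intro a ha; simp only [mem_Icc] at *; omega
    · intro l hl; simp only [mem_Icc] at hl; omega
    · intro a ha; simp only [mem_Icc] at ha; omega
    · intro l hl; simp only [mem_Icc] at hl
      have e1 : ν + m - 1 - (ν + m - 1 - l) = l := by omega
      have e2 : ν + m - l - 1 = ν + m - 1 - l := by omega
      rw [e1, e2]
  rw [step1]
  have step2 : ∑ a ∈ Icc (m - 1) (ν + m - 2), (2*(ν + m - 1 - a) - 1) * a.choose (2*m - 3)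
      = ∑ a ∈ Icc (2*m - 3) (ν + m - 2), (2*(ν + m - 1 - a) - 1) * a.choose (2*m - 3) := by
    symm
    apply Finset.sum_subset
    · apply Finset.Icc_subset_Icc_left; omega
    · intro a ha hna
      simp only [mem_Icc] at ha hna
      have : a < 2*m - 3 := by omega
      rw [Nat.choose_eq_zero_of_lt this, Nat.mul_zero]
  rw [step2]
  have step3 : ∑ a ∈ Icc (2*m - 3) (ν + m - 2), (2*(ν + m - 1 - a) - 1) * a.choose (2*m - 3)
      = ∑ a ∈ Icc (2*m - 3) (ν + m - 2), (2*((ν + m - 2) - a) + 1) * a.choose (2*m - 3) := by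
    apply Finset.sum_congr rfl
    intro a ha; simp only [mem_Icc] at ha
    congr 1
    omega
  rw [step3, weighted_hs (2*m-3) (ν+m-2) (by omega)]
  have a1 : ν+m-2+1 = ν+m-1 := by omega
  have a2 : 2*m-3+1 = 2*m-2 := by omega
  have a3 : 2*m-3+2 = 2*m-1 := by omega
  rw [a1, a2, a3]

lemma lhsNat (ν : ℕ) :
    (2*ν+1) + ∑ m ∈ Icc 2 (ν+1), ((ν+m-1).choose (2*m-2) + 2*(ν+m-1).choose (2*m-1))
      = ∑ i ∈ range (ν+1), ((ν+i).choose (2*i) + 2*(ν+i).choose (2*i+1)) := by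
  rw [Finset.sum_range_succ' (fun i => (ν+i).choose (2*i) + 2*(ν+i).choose (2*i+1)) ν]
  have hre : ∑ m ∈ Icc 2 (ν+1), ((ν+m-1).choose (2*m-2) + 2*(ν+m-1).choose (2*m-1))
      = ∑ i ∈ range ν, ((ν+(i+1)).choose (2*(i+1)) + 2*(ν+(i+1)).choose (2*(i+1)+1)) := by
    apply Finset.sum_nbij' (fun m => m - 2) (fun i => i + 2)
    · intro m hm; simp only [mem_Icc, mem_range] at *; omega
    · intro i hi; simp only [mem_Icc, mem_range] at *; omega
    · intro m hm; simp only [mem_Icc] at hm; omega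
    · intro i _; omega
    · intro m hm; simp only [mem_Icc] at hm
      have e1 : ν + (m - 2 + 1) = ν + m - 1 := by omega
      have e2 : 2*(m - 2 + 1) = 2*m - 2 := by omega
      have e3 : 2*(m - 2 + 1) + 1 = 2*m - 1 := by omega
      rw [e1, e3, e2]
  rw [hre]
  simp [Nat.choose_one_right]
  omega

lemma finalNat (ν : ℕ) :
    ∑ i ∈ range (ν+1), ((ν+i).choose (2*i) + 2*(ν+i).choose (2*i+1))
      = ∑ m ∈ range (ν+1), (2*ν+1-m).choose m + ∑ j ∈ range ν, (2*ν-1-j).choose j := by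
  have r1 : ∑ m ∈ range (ν+1), (2*ν+1-m).choose m
      = ∑ i ∈ range (ν+1), (ν+1+i).choose (2*i+1) := by
    rw [← Finset.sum_range_reflect (fun m => (2*ν+1-m).choose m) (ν+1)]
    apply Finset.sum_congr rfl
    intro i hi; simp only [mem_range] at hi
    have h1 : 2*ν+1-(ν+1-1-i) = ν+1+i := by omega
    have h2 : ν+1-1-i = (ν+1+i) - (2*i+1) := by omega
    rw [h1, h2, Nat.choose_symm (by omega)]
  have r2 : ∑ j ∈ range ν, (2*ν-1-j).choose j
      = ∑ i ∈ range ν, (ν+i).choose (2*i+1) := by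
    rw [← Finset.sum_range_reflect (fun j => (2*ν-1-j).choose j) ν]
    apply Finset.sum_congr rfl
    intro i hi; simp only [mem_range] at hi
    have h1 : 2*ν-1-(ν-1-i) = ν+i := by omega
    have h2 : ν-1-i = (ν+i) - (2*i+1) := by omega
    rw [h1, h2, Nat.choose_symm (by omega)]
  rw [r1, r2]
  have pas : ∑ i ∈ range (ν+1), (ν+1+i).choose (2*i+1)
      = ∑ i ∈ range (ν+1), ((ν+i).choose (2*i) + (ν+i).choose (2*i+1)) := by
    apply Finset.sum_congr rfl
    intro i _
    rw [show ν+1+i = (ν+i)+1 from by omega]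
    exact Nat.choose_succ_succ (ν+i) (2*i)
  rw [pas, Finset.sum_add_distrib, Finset.sum_add_distrib]
  have h0 : ∑ i ∈ range (ν+1), (ν+i).choose (2*i+1)
      = ∑ i ∈ range ν, (ν+i).choose (2*i+1) := by
    rw [Finset.sum_range_succ, Nat.choose_eq_zero_of_lt (by omega), Nat.add_zero]
  have hm : ∑ i ∈ range (ν+1), 2 * (ν+i).choose (2*i+1)
      = 2 * ∑ i ∈ range (ν+1), (ν+i).choose (2*i+1) := by
    rw [Finset.mul_sum]
  omega

lemma mulkey (d C C' mm : ℕ) (h : d * C' = C * mm) :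
    (d + mm) * C = d * (C + C') := by
  rw [Nat.add_mul, Nat.mul_add, h, Nat.mul_comm mm C]

theorem binomial_identity_one (ν : ℕ) :
    (2 * (ν : ℚ) + 1) +
      ∑ m ∈ Finset.Icc 2 (ν + 1), ∑ l ∈ Finset.Icc 1 ν,
        (2 * (l : ℚ) - 1) * (Nat.choose (ν + m - l - 1) (2 * m - 3) : ℚ) =
    ∑ m ∈ Finset.range (ν + 1),
      (2 * (ν : ℚ) + 1) / ((2 * ν + 1 - m : ℕ) : ℚ) *
        (Nat.choose (2 * ν + 1 - m) m : ℚ) := by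
  have inner' : ∀ m ∈ Icc 2 (ν+1),
      ∑ l ∈ Icc 1 ν, (2*(l:ℚ)-1) * ((ν+m-l-1).choose (2*m-3) : ℚ)
        = (((ν+m-1).choose (2*m-2) + 2*(ν+m-1).choose (2*m-1) : ℕ) : ℚ) := by
    intro m hm; simp only [mem_Icc] at hm
    rw [← innerNat ν m hm.1 hm.2, Nat.cast_sum]
    apply Finset.sum_congr rfl
    intro l hl; simp only [mem_Icc] at hl
    rw [Nat.cast_mul]
    congr 1
    rw [Nat.cast_sub (by omega : 1 ≤ 2*l)]
    push_cast
    ring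
  rw [Finset.sum_congr rfl inner']
  have lhsQ : (2*(ν:ℚ)+1) + ∑ m ∈ Icc 2 (ν+1),
      (((ν+m-1).choose (2*m-2) + 2*(ν+m-1).choose (2*m-1) : ℕ) : ℚ)
      = (((2*ν+1) + ∑ m ∈ Icc 2 (ν+1),
          ((ν+m-1).choose (2*m-2) + 2*(ν+m-1).choose (2*m-1)) : ℕ) : ℚ) := by
    push_cast
    ring
  rw [lhsQ, lhsNat, finalNat]
  -- now handle the RHS
  have per : ∀ m ∈ range (ν+1),
      (2*(ν:ℚ)+1)/((2*ν+1-m : ℕ):ℚ) * ((2*ν+1-m).choose m : ℚ)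
        = ((2*ν+1-m).choose m : ℚ) + (if m = 0 then 0 else ((2*ν-m).choose (m-1) : ℚ)) := by
    intro m hm; simp only [mem_range] at hm
    have hmν : m ≤ ν := by omega
    have hd : ((2*ν+1-m : ℕ):ℚ) ≠ 0 := by
      have : 0 < 2*ν+1-m := by omega
      exact_mod_cast this.ne'
    have hnum : (2*(ν:ℚ)+1) = ((2*ν+1 : ℕ):ℚ) := by push_cast; ring
    rcases Nat.eq_zero_or_pos m with h0 | h0
    · subst h0
      have hd' : ((2*ν+1 : ℕ):ℚ) ≠ 0 := by
        have : 0 < 2*ν+1 := by omega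
        exact_mod_cast this.ne'
      simp only [Nat.sub_zero, Nat.choose_zero_right, Nat.cast_one, mul_one, hnum]
      rw [div_self hd']
      simp
    · rw [if_neg (by omega)]
      rw [div_mul_eq_mul_div, div_eq_iff hd, hnum]
      have h1 := Nat.add_one_mul_choose_eq (2*ν-m) (m-1)
      rw [show 2*ν-m+1 = 2*ν+1-m from by omega, show m-1+1 = m from by omega] at h1
      have key := mulkey (2*ν+1-m) ((2*ν+1-m).choose m) ((2*ν-m).choose (m-1)) m h1
      rw [show 2*ν+1-m+m = 2*ν+1 from by omega] at key
      calc ((2*ν+1:ℕ):ℚ) * ((2*ν+1-m).choose m : ℚ)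
          = (((2*ν+1) * (2*ν+1-m).choose m : ℕ):ℚ) := by push_cast; ring
        _ = (((2*ν+1-m) * ((2*ν+1-m).choose m + (2*ν-m).choose (m-1)) : ℕ):ℚ) := by
            rw [key]
        _ = (((2*ν+1-m).choose m : ℚ) + ((2*ν-m).choose (m-1) : ℚ)) * ((2*ν+1-m : ℕ):ℚ) := by
            push_cast; ring
  rw [Finset.sum_congr rfl per, Finset.sum_add_distrib]
  rw [Finset.sum_range_succ'
    (fun m => if m = 0 then (0:ℚ) else ((2*ν-m).choose (m-1) : ℚ)) ν]
  norm_num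
  apply Finset.sum_congr rfl
  intro i _
  congr 2
  omega
end

section
/- For every integer ν ≥ 0, ν + Σ_{m=2}^{ν} Σ_{l=1}^{ν−1} l·C(ν+m−l−2, 2m−3) = Σ_{m=1}^{ν} C(ν+m−1, 2m−1). -/
/-!
Put `ν = m + n` and `r = 2m - 3`. The inner sum over `l` is then
`∑ l * C(n + r + 1 - l, r)`, whose terms vanish for `l > n + 1`; reversing the summation order
turns it into `∑_{i ≤ n} (n + 1 - i) C(i + r, r)`, which induction on `n` and the hockey-stick
identity evaluate to `C(n + r + 2, r + 2) = C(ν + m - 1, 2m - 1)`. So each summand with `m ≥ 2` on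
the left matches the corresponding one on the right, and `ν` is the `m = 1` term.
-/

open Finset

namespace Nat

theorem sum_range_mul_add_choose (n r : ℕ) :
    ∑ i ∈ range (n + 1), (n + 1 - i) * (i + r).choose r = (n + r + 2).choose (r + 2) := by
  induction n with
  | zero => simp
  | succ n ih =>
    have split : ∀ i ∈ range (n + 2), (n + 2 - i) * (i + r).choose r =
        (n + 1 - i) * (i + r).choose r + (i + r).choose r := by
      intro i hi
      rw [mem_range] at hi
      rw [show n + 2 - i = n + 1 - i + 1 by omega, add_one_mul]
    rw [sum_congr rfl split, sum_add_distrib, sum_range_succ, Nat.sub_self, zero_mul, add_zero,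
      ih, sum_range_add_choose, show n + 1 + r + 1 = n + r + 2 by ring,
      show n + 1 + r + 2 = n + r + 2 + 1 by ring, choose_succ_succ (n + r + 2) (r + 1), add_comm]

theorem sum_Icc_mul_choose_sub (n r L : ℕ) (hr : 1 ≤ r) (hL : n + 1 ≤ L) :
    ∑ l ∈ Icc 1 L, l * (n + r + 1 - l).choose r = (n + r + 2).choose (r + 2) := by
  have vanish : ∀ l ∈ Icc 1 L, l ∉ Icc 1 (n + 1) → l * (n + r + 1 - l).choose r = 0 := by
    intro l hl hl'
    rw [mem_Icc] at hl hl'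
    rw [choose_eq_zero_of_lt (show n + r + 1 - l < r by omega), mul_zero]
  have reflect : ∑ l ∈ Icc 1 (n + 1), l * (n + r + 1 - l).choose r =
      ∑ i ∈ range (n + 1), (n + 1 - i) * (i + r).choose r := by
    refine sum_nbij' (fun l ↦ n + 1 - l) (fun i ↦ n + 1 - i) ?_ ?_ ?_ ?_ ?_ <;>
      intro a ha <;> simp only [mem_Icc, mem_range] at ha ⊢
    case refine_5 => congr 2 <;> omega
    all_goals omega
  rw [← sum_subset (Icc_subset_Icc_right hL) vanish, reflect, sum_range_mul_add_choose]

end Nat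

theorem binomial_identity_two (ν : ℕ) :
    ν + ∑ m ∈ Finset.Icc 2 ν, ∑ l ∈ Finset.Icc 1 (ν - 1),
        l * Nat.choose (ν + m - l - 2) (2 * m - 3) =
      ∑ m ∈ Finset.Icc 1 ν, Nat.choose (ν + m - 1) (2 * m - 1) := by
  rcases Nat.eq_zero_or_pos ν with rfl | hν
  · simp
  have inner : ∀ m ∈ Icc 2 ν, ∑ l ∈ Icc 1 (ν - 1), l * (ν + m - l - 2).choose (2 * m - 3) =
      (ν + m - 1).choose (2 * m - 1) := by
    intro m hm
    rw [mem_Icc] at hm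
    obtain ⟨n, rfl⟩ := Nat.exists_eq_add_of_le hm.2
    have key := Nat.sum_Icc_mul_choose_sub n (2 * m - 3) (m + n - 1) (by omega) (by omega)
    rw [show n + (2 * m - 3) + 2 = m + n + m - 1 by omega,
      show 2 * m - 3 + 2 = 2 * m - 1 by omega] at key
    rw [← key]
    refine sum_congr rfl fun l _ ↦ ?_
    congr 2
    omega
  rw [sum_congr rfl inner, ← insert_Icc_add_one_left_eq_Icc (show 1 ≤ ν from hν),
    sum_insert (by simp)]
  simp
end

section
/- For every integer ν ≥ 1, the number of n-colour self-inverse compositions of 2ν equals three times the number of n-colour compositions of ν. Moreover, for every integer ν ≥ 0, the number of n-colour self-inverse compositions of 2ν+1 equals the Lucas number L_{2ν+1} = F_{2ν} + F_{2ν+2}, where F denotes the Fibonacci sequence (F_0 = 0, F_1 = 1, F_n = F_{n−1} + F_{n−2}). -/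
abbrev Comp (ν : ℕ) := {l : List (ℕ × ℕ) // IsNColourComposition ν l}
abbrev SComp (m : ℕ) := {l : List (ℕ × ℕ) // IsNColourComposition m l ∧ l.reverse = l}

lemma comp_zero_eq_nil {l : List (ℕ × ℕ)} (h : IsNColourComposition 0 l) : l = [] := by
  obtain ⟨hc, hs⟩ := h
  cases l with
  | nil => rfl
  | cons a t =>
      exfalso
      have h1 := hc a (by simp)
      simp only [List.map_cons, List.sum_cons] at hs
      omega

def consMap (n : ℕ) : (Σ p : Fin (n + 1), Fin (p.val + 1) × Comp (n - p.val)) → Comp (n + 1) :=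
  fun x => ⟨(x.1.val + 1, x.2.1.val + 1) :: x.2.2.val, by
    obtain ⟨p, c, l⟩ := x
    obtain ⟨hc, hs⟩ := l.2
    refine ⟨?_, ?_⟩
    · intro pc hpc
      rcases List.mem_cons.1 hpc with h | h
      · subst h; simp; omega
      · exact hc pc h
    · simp only [List.map_cons, List.sum_cons, hs]
      have := p.isLt
      omega⟩

lemma consMap_bij (n : ℕ) : Function.Bijective (consMap n) := by
  constructor
  · rintro ⟨p, c, l⟩ ⟨p', c', l'⟩ h
    simp only [consMap, Subtype.mk.injEq, List.cons.injEq, Prod.mk.injEq] at h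
    obtain ⟨⟨hp, hcc⟩, hl⟩ := h
    have hp' : p = p' := Fin.ext (by omega)
    subst hp'
    have hc' : c = c' := Fin.ext (by omega)
    subst hc'
    have : l = l' := Subtype.ext hl
    subst this
    rfl
  · rintro ⟨l, hc, hs⟩
    cases l with
    | nil => simp at hs
    | cons a t =>
        have ha := hc a (by simp)
        simp only [List.map_cons, List.sum_cons] at hs
        have ha1 : 1 ≤ a.1 := le_trans ha.1 ha.2
        refine ⟨⟨⟨a.1 - 1, by omega⟩, ⟨a.2 - 1, ?_⟩,
          ⟨t, ⟨fun pc hpc => hc pc (by simp [hpc]), ?_⟩⟩⟩, ?_⟩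
        · simp only [Fin.val_mk]; omega
        · simp only [Fin.val_mk]; omega
        · apply Subtype.ext
          show (a.1 - 1 + 1, a.2 - 1 + 1) :: t = a :: t
          obtain ⟨a1, a2⟩ := a
          simp only [Prod.fst, Prod.snd] at ha ha1
          have : a1 - 1 + 1 = a1 := by omega
          have h2 : a2 - 1 + 1 = a2 := by omega
          rw [this, h2]

lemma comp_finite : ∀ ν, Finite (Comp ν) := by
  intro ν
  induction ν using Nat.strong_induction_on with
  | _ ν IH =>
    cases ν with
    | zero =>
        have : ∀ x : Comp 0, x = ⟨[], by constructor <;> simp⟩ := by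
          rintro ⟨l, hl⟩; exact Subtype.ext (comp_zero_eq_nil hl)
        haveI : Subsingleton (Comp 0) := ⟨fun a b => (this a).trans (this b).symm⟩
        exact Finite.of_subsingleton
    | succ n =>
        haveI : ∀ p : Fin (n + 1), Finite (Comp (n - p.val)) :=
          fun p => IH _ (by omega)
        exact Finite.of_surjective _ (consMap_bij n).2

def selfMap (n : ℕ) :
    (Fin (n + 1) ⊕ Σ p : Fin ((n + 1) / 2), Fin (p.val + 1) × SComp (n + 1 - 2 * (p.val + 1))) →
      SComp (n + 1) :=
  fun x =>
    match x with
    | Sum.inl c => ⟨[(n + 1, c.val + 1)], by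
        refine ⟨⟨?_, ?_⟩, by simp⟩
        · intro pc hpc
          simp only [List.mem_singleton] at hpc
          subst hpc
          simp
          omega
        · simp⟩
    | Sum.inr ⟨p, c, l⟩ => ⟨(p.val + 1, c.val + 1) :: (l.val ++ [(p.val + 1, c.val + 1)]), by
        obtain ⟨⟨hc, hs⟩, hr⟩ := l.2
        have hp : 2 * (p.val + 1) ≤ n + 1 := by
          have := p.isLt
          omega
        refine ⟨⟨?_, ?_⟩, ?_⟩
        · intro pc hpc
          rcases List.mem_cons.1 hpc with h | h
          · subst h; simp; omega
          · rcases List.mem_append.1 h with h' | h'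
            · exact hc pc h'
            · simp only [List.mem_singleton] at h'
              subst h'; simp; omega
        · simp only [List.map_cons, List.sum_cons, List.map_append, List.sum_append,
            List.map_cons, List.sum_cons, List.map_nil, List.sum_nil, hs]
          omega
        · simp only [List.reverse_cons, List.reverse_append, List.reverse_cons,
            List.reverse_nil, List.nil_append, List.singleton_append, List.cons_append, hr]⟩

lemma selfMap_bij (n : ℕ) : Function.Bijective (selfMap n) := by
  constructor
  · rintro (c | ⟨p, c, l⟩) (c' | ⟨p', c', l'⟩) h <;>
      simp only [selfMap, Subtype.mk.injEq] at h
    · simp only [List.cons.injEq, Prod.mk.injEq] at h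
      have : c = c' := Fin.ext (by omega)
      rw [this]
    · exfalso
      have := congrArg List.length h
      simp at this
    · exfalso
      have := congrArg List.length h
      simp at this
    · simp only [List.cons.injEq, Prod.mk.injEq] at h
      obtain ⟨⟨hp, hcc⟩, hl⟩ := h
      have hp' : p = p' := Fin.ext (by omega)
      subst hp'
      have hc' : c = c' := Fin.ext (by omega)
      subst hc'
      have : l = l' := Subtype.ext (List.append_cancel_right hl)
      subst this
      rfl
  · rintro ⟨l, ⟨hc, hs⟩, hr⟩
    match l with
    | [] => simp at hs
    | [a] =>
        have ha := hc a (by simp)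
        simp only [List.map_cons, List.sum_cons, List.map_nil, List.sum_nil, add_zero] at hs
        refine ⟨Sum.inl ⟨a.2 - 1, by omega⟩, ?_⟩
        apply Subtype.ext
        show [(n + 1, a.2 - 1 + 1)] = [a]
        obtain ⟨a1, a2⟩ := a
        simp only [Prod.fst, Prod.snd] at ha hs
        have h1 : a2 - 1 + 1 = a2 := by omega
        rw [h1, hs]
    | a :: b :: r =>
        obtain ⟨M, z, hMz⟩ : ∃ M z, (b :: r : List (ℕ × ℕ)) = M ++ [z] :=
          ⟨(b :: r).dropLast, (b :: r).getLast (by simp),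
            (List.dropLast_append_getLast (by simp)).symm⟩
        have hl : (a :: b :: r : List (ℕ × ℕ)) = a :: (M ++ [z]) := by rw [← hMz]
        rw [hl] at hr
        have hrev : (a :: (M ++ [z])).reverse = z :: (M.reverse ++ [a]) := by
          simp [List.reverse_cons, List.reverse_append]
        rw [hrev] at hr
        have hza : z = a := (List.cons.injEq _ _ _ _ ▸ hr).1
        have hMrev : M.reverse = M := by
          have h2 := (List.cons.injEq _ _ _ _ ▸ hr).2
          rw [hza] at h2
          exact List.append_cancel_right h2
        have ha := hc a (by simp)
        have hsum : a.1 + ((M.map Prod.fst).sum + a.1) = n + 1 := by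
          rw [hl] at hs
          simpa [hza, List.map_append, List.sum_append] using hs
        have ha1 : 1 ≤ a.1 := le_trans ha.1 ha.2
        have hple : 2 * a.1 ≤ n + 1 := by omega
        have hpfin : a.1 - 1 < (n + 1) / 2 := by omega
        refine ⟨Sum.inr ⟨⟨a.1 - 1, hpfin⟩, ⟨a.2 - 1, by simp only [Fin.val_mk]; omega⟩,
          ⟨M, ⟨⟨?_, ?_⟩, hMrev⟩⟩⟩, ?_⟩
        · intro pc hpc
          refine hc pc ?_
          rw [hl]
          simp [hpc]
        · simp only [Fin.val_mk]
          omega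
        · apply Subtype.ext
          show (a.1 - 1 + 1, a.2 - 1 + 1) :: (M ++ [(a.1 - 1 + 1, a.2 - 1 + 1)]) = a :: b :: r
          have h1 : a.1 - 1 + 1 = a.1 := by omega
          have h2 : a.2 - 1 + 1 = a.2 := by omega
          rw [h1, h2, hl, hza]

lemma scomp_finite : ∀ m, Finite (SComp m) := by
  intro m
  induction m using Nat.strong_induction_on with
  | _ m IH =>
    cases m with
    | zero =>
        have huniq : ∀ x : SComp 0, x = ⟨[], ⟨⟨by simp, by simp⟩, by simp⟩⟩ := by
          rintro ⟨l, hl, hrev⟩; exact Subtype.ext (comp_zero_eq_nil hl)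
        haveI : Subsingleton (SComp 0) := ⟨fun a b => (huniq a).trans (huniq b).symm⟩
        exact Finite.of_subsingleton
    | succ n =>
        haveI : ∀ p : Fin ((n + 1) / 2), Finite (SComp (n + 1 - 2 * (p.val + 1))) :=
          fun p => IH _ (by omega)
        exact Finite.of_surjective _ (selfMap_bij n).2

lemma nat_card_sigma {k : ℕ} (β : Fin k → Type) [∀ i, Finite (β i)] :
    Nat.card (Σ i, β i) = ∑ i : Fin k, Nat.card (β i) := by
  letI : ∀ i, Fintype (β i) := fun i => Fintype.ofFinite (β i)
  simp [Nat.card_eq_fintype_card, Fintype.card_sigma]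

lemma N_zero : Nat.card (Comp 0) = 1 := by
  haveI : Nonempty (Comp 0) := ⟨⟨[], by constructor <;> simp⟩⟩
  haveI : Subsingleton (Comp 0) :=
    ⟨fun a b => Subtype.ext ((comp_zero_eq_nil a.2).trans (comp_zero_eq_nil b.2).symm)⟩
  exact Nat.card_unique

lemma S_zero : Nat.card (SComp 0) = 1 := by
  haveI : Nonempty (SComp 0) := ⟨⟨[], ⟨by constructor <;> simp, by simp⟩⟩⟩
  haveI : Subsingleton (SComp 0) :=
    ⟨fun a b => Subtype.ext ((comp_zero_eq_nil a.2.1).trans (comp_zero_eq_nil b.2.1).symm)⟩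
  exact Nat.card_unique

lemma N_rec (n : ℕ) :
    Nat.card (Comp (n + 1)) = ∑ p ∈ Finset.range (n + 1), (p + 1) * Nat.card (Comp (n - p)) := by
  haveI : ∀ ν, Finite (Comp ν) := comp_finite
  rw [← Nat.card_congr (Equiv.ofBijective (consMap n) (consMap_bij n))]
  rw [nat_card_sigma]
  rw [← Fin.sum_univ_eq_sum_range (fun p => (p + 1) * Nat.card (Comp (n - p))) (n + 1)]
  apply Finset.sum_congr rfl
  intro p _
  rw [Nat.card_prod]
  simp

lemma S_rec (n : ℕ) :
    Nat.card (SComp (n + 1)) =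
      (n + 1) + ∑ p ∈ Finset.range ((n + 1) / 2),
        (p + 1) * Nat.card (SComp (n + 1 - 2 * (p + 1))) := by
  haveI : ∀ m, Finite (SComp m) := scomp_finite
  rw [← Nat.card_congr (Equiv.ofBijective (selfMap n) (selfMap_bij n))]
  rw [Nat.card_sum, nat_card_sigma]
  rw [← Fin.sum_univ_eq_sum_range
    (fun p => (p + 1) * Nat.card (SComp (n + 1 - 2 * (p + 1)))) ((n + 1) / 2)]
  congr 1
  · simp
  · apply Finset.sum_congr rfl
    intro p _
    rw [Nat.card_prod]
    simp

/-- value of the number of n-colour compositions -/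
def g (k : ℕ) : ℕ := if k = 0 then 1 else Nat.fib (2 * k)

lemma reflect_sum (h : ℕ → ℕ) (n : ℕ) :
    ∑ p ∈ Finset.range (n + 1), (p + 1) * h (n - p) =
      ∑ q ∈ Finset.range (n + 1), (n + 1 - q) * h q := by
  rw [← Finset.sum_range_reflect (fun q => (n + 1 - q) * h q) (n + 1)]
  apply Finset.sum_congr rfl
  intro j hj
  simp only [Finset.mem_range] at hj
  have h1 : n + 1 - 1 - j = n - j := by omega
  rw [h1]
  congr 1
  omega

lemma gsum (n : ℕ) : ∑ q ∈ Finset.range (n + 1), g q = Nat.fib (2 * n + 1) := by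
  induction n with
  | zero => simp [g]
  | succ n IH =>
      rw [Finset.sum_range_succ, IH]
      have h1 : g (n + 1) = Nat.fib (2 * n + 2) := by
        have e : 2 * (n + 1) = 2 * n + 2 := by ring
        simp [g, e]
      rw [h1]
      have h2 := Nat.fib_add_two (n := 2 * n + 1)
      ring_nf at h2 ⊢
      omega

lemma gsum2 (n : ℕ) :
    ∑ q ∈ Finset.range (n + 1), (n + 1 - q) * g q = Nat.fib (2 * n + 2) := by
  induction n with
  | zero => simp [g]
  | succ n IH =>
      have hsplit : ∀ q ∈ Finset.range (n + 2),
          (n + 2 - q) * g q = (n + 1 - q) * g q + g q := by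
        intro q hq
        simp only [Finset.mem_range] at hq
        have : n + 2 - q = (n + 1 - q) + 1 := by omega
        rw [this, add_mul, one_mul]
      rw [Finset.sum_congr rfl hsplit, Finset.sum_add_distrib]
      rw [Finset.sum_range_succ (fun q => (n + 1 - q) * g q), IH]
      simp only [Nat.sub_self, zero_mul, add_zero]
      rw [gsum]
      have h2 := Nat.fib_add_two (n := 2 * n + 2)
      have h3 := Nat.fib_add_two (n := 2 * n + 1)
      ring_nf at h2 h3 ⊢
      omega

lemma N_eq_g : ∀ ν, Nat.card (Comp ν) = g ν := by
  intro ν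
  induction ν using Nat.strong_induction_on with
  | _ ν IH =>
    cases ν with
    | zero => rw [N_zero]; rfl
    | succ n =>
        rw [N_rec]
        have : ∀ p ∈ Finset.range (n + 1),
            (p + 1) * Nat.card (Comp (n - p)) = (p + 1) * g (n - p) := by
          intro p hp
          simp only [Finset.mem_range] at hp
          rw [IH (n - p) (by omega)]
        rw [Finset.sum_congr rfl this, reflect_sum g n, gsum2]
        have e : 2 * (n + 1) = 2 * n + 2 := by ring
        simp [g, e]

lemma tsum3 (k : ℕ) :
    ∑ q ∈ Finset.range (k + 1), (k + 1 - q) * (if q = 0 then 1 else 3 * Nat.fib (2 * q))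
      + (2 * k + 2) = 3 * Nat.fib (2 * k + 2) := by
  rw [← gsum2 k]
  rw [Finset.sum_range_succ'
      (fun q => (k + 1 - q) * (if q = 0 then 1 else 3 * Nat.fib (2 * q))) k,
    Finset.sum_range_succ' (fun q => (k + 1 - q) * g q) k]
  have hcong : ∀ q ∈ Finset.range k,
      (k + 1 - (q + 1)) * (if q + 1 = 0 then 1 else 3 * Nat.fib (2 * (q + 1))) =
        3 * ((k + 1 - (q + 1)) * g (q + 1)) := by
    intro q hq
    rw [if_neg (Nat.succ_ne_zero q)]
    simp only [g, if_neg (Nat.succ_ne_zero q)]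
    ring
  rw [Finset.sum_congr rfl hcong]
  have hg0 : g 0 = 1 := rfl
  rw [if_pos rfl, hg0, mul_add, Finset.mul_sum]
  omega

lemma S_even : ∀ ν, Nat.card (SComp (2 * ν)) = if ν = 0 then 1 else 3 * Nat.fib (2 * ν) := by
  intro ν
  induction ν using Nat.strong_induction_on with
  | _ ν IH =>
    cases ν with
    | zero => simpa using S_zero
    | succ k =>
        have e : 2 * (k + 1) = (2 * k + 1) + 1 := by ring
        rw [e, S_rec (2 * k + 1)]
        have ediv : (2 * k + 1 + 1) / 2 = k + 1 := by omega
        rw [ediv]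
        have hterm : ∀ p ∈ Finset.range (k + 1),
            (p + 1) * Nat.card (SComp (2 * k + 1 + 1 - 2 * (p + 1))) =
              (p + 1) * (if k - p = 0 then 1 else 3 * Nat.fib (2 * (k - p))) := by
          intro p hp
          simp only [Finset.mem_range] at hp
          have e2 : 2 * k + 1 + 1 - 2 * (p + 1) = 2 * (k - p) := by omega
          rw [e2, IH (k - p) (by omega)]
        rw [Finset.sum_congr rfl hterm]
        have hr := reflect_sum (fun q => if q = 0 then 1 else 3 * Nat.fib (2 * q)) k
        rw [hr, if_neg (Nat.succ_ne_zero k)]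
        have ht := tsum3 k
        ring_nf at ht ⊢
        omega

lemma usum (n : ℕ) :
    ∑ q ∈ Finset.range (n + 1), (Nat.fib (2 * q) + Nat.fib (2 * q + 2)) + 2 =
      Nat.fib (2 * n + 1) + Nat.fib (2 * n + 3) := by
  induction n with
  | zero => decide
  | succ n IH =>
      rw [Finset.sum_range_succ]
      have h1 := Nat.fib_add_two (n := 2 * n + 1)
      have h2 := Nat.fib_add_two (n := 2 * n + 2)
      have h3 := Nat.fib_add_two (n := 2 * n + 3)
      ring_nf at h1 h2 h3 IH ⊢
      omega

lemma wsum : ∀ n, ∑ q ∈ Finset.range n, (n - q) * (Nat.fib (2 * q) + Nat.fib (2 * q + 2))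
    + (2 * n + 1) = Nat.fib (2 * n) + Nat.fib (2 * n + 2) := by
  intro n
  induction n with
  | zero => decide
  | succ n IH =>
      have hsplit : ∀ q ∈ Finset.range (n + 1),
          (n + 1 - q) * (Nat.fib (2 * q) + Nat.fib (2 * q + 2)) =
            (n - q) * (Nat.fib (2 * q) + Nat.fib (2 * q + 2)) +
              (Nat.fib (2 * q) + Nat.fib (2 * q + 2)) := by
        intro q hq
        simp only [Finset.mem_range] at hq
        have : n + 1 - q = (n - q) + 1 := by omega
        rw [this, add_mul, one_mul]
      rw [Finset.sum_congr rfl hsplit, Finset.sum_add_distrib]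
      rw [Finset.sum_range_succ (fun q => (n - q) * (Nat.fib (2 * q) + Nat.fib (2 * q + 2)))]
      simp only [Nat.sub_self, zero_mul, add_zero]
      have hu := usum n
      have h1 := Nat.fib_add_two (n := 2 * n)
      have h2 := Nat.fib_add_two (n := 2 * n + 1)
      have h3 := Nat.fib_add_two (n := 2 * n + 2)
      ring_nf at hu h1 h2 h3 IH ⊢
      omega

lemma S_odd : ∀ ν, Nat.card (SComp (2 * ν + 1)) = Nat.fib (2 * ν) + Nat.fib (2 * ν + 2) := by
  intro ν
  induction ν using Nat.strong_induction_on with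
  | _ ν IH =>
    cases ν with
    | zero =>
        rw [show 2 * 0 + 1 = 0 + 1 from rfl, S_rec 0]
        simp
    | succ k =>
        have e : 2 * (k + 1) + 1 = (2 * k + 2) + 1 := by ring
        rw [e, S_rec (2 * k + 2)]
        have ediv : (2 * k + 2 + 1) / 2 = k + 1 := by omega
        rw [ediv]
        have hterm : ∀ p ∈ Finset.range (k + 1),
            (p + 1) * Nat.card (SComp (2 * k + 2 + 1 - 2 * (p + 1))) =
              (p + 1) * (Nat.fib (2 * (k - p)) + Nat.fib (2 * (k - p) + 2)) := by
          intro p hp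
          simp only [Finset.mem_range] at hp
          have e2 : 2 * k + 2 + 1 - 2 * (p + 1) = 2 * (k - p) + 1 := by omega
          rw [e2, IH (k - p) (by omega)]
        rw [Finset.sum_congr rfl hterm]
        have hr := reflect_sum (fun q => Nat.fib (2 * q) + Nat.fib (2 * q + 2)) k
        rw [hr]
        have hw := wsum (k + 1)
        ring_nf at hw ⊢
        omega

theorem selfinverse_combinatorial_interpretation :
    (∀ ν : ℕ, 1 ≤ ν →
      Nat.card {l : List (ℕ × ℕ) //
          IsNColourComposition (2 * ν) l ∧ l.reverse = l} =
        3 * Nat.card {l : List (ℕ × ℕ) // IsNColourComposition ν l}) ∧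
    (∀ ν : ℕ,
      Nat.card {l : List (ℕ × ℕ) //
          IsNColourComposition (2 * ν + 1) l ∧ l.reverse = l} =
        Nat.fib (2 * ν) + Nat.fib (2 * ν + 2)) := by
  constructor
  · intro ν hν
    have h1 := S_even ν
    rw [if_neg (by omega)] at h1
    have h2 := N_eq_g ν
    rw [show g ν = Nat.fib (2 * ν) from by simp [g]; omega] at h2
    rw [h1, h2]
  · exact S_odd
end
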